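/- For every n ∈ ℕ and every v ∈ ℝ, I_n(v) = 2e^{−v²/2} · Σ_{k=0}^{⌊(n−1)/2⌋} 2^k · ((n−1)!!/(n−1−2k)!!) · H_{n−1−2k}(v) + 𝟙_{n even} · 2^{n/2} (n−1)!! √(2π) (1 − Φ(v)). -/

import Mathlib

/-- The Hermite polynomials `H_n(x) = (-1)^n e^{x²} (d/dx)^n e^{-x²}`. -/
noncomputable def hermiteH (n : ℕ) (x : ℝ) : ℝ :=
  (-1 : ℝ) ^ n * Real.exp (x ^ 2) * iteratedDeriv n (fun y => Real.exp (-y ^ 2)) x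

/-- `I_n(v) = ∫_v^∞ e^{-t²/2} H_n(t) dt`. -/
noncomputable def hermiteI (n : ℕ) (v : ℝ) : ℝ :=
  ∫ t in Set.Ioi v, Real.exp (-t ^ 2 / 2) * hermiteH n t

/-- The standard Gaussian distribution function `Φ`. -/
noncomputable def gaussPhi (x : ℝ) : ℝ :=
  ∫ y in Set.Iic x, (Real.sqrt (2 * Real.pi))⁻¹ * Real.exp (-y ^ 2 / 2)

/-
Integrating `(e^{-t²/2} H_n)' = e^{-t²/2} (n H_{n-1} - H_{n+1} / 2)` over `(v, ∞)` gives the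
recurrence `I_{n+1}(v) = 2 e^{-v²/2} H_n(v) + 2n I_{n-1}(v)`, and the closed form is this
recurrence unrolled down to `I_1(v) = 2 e^{-v²/2}` or `I_0(v) = √(2π) (1 - Φ(v))`. The
derivative identity combines `H_n' = 2x H_n - H_{n+1}`, read off the definition, with the
three-term recurrence `H_{n+1} = 2x H_n - 2n H_{n-1}`; polynomial growth of `H_n` makes all
integrals converge.
-/

open MeasureTheory Real Filter Polynomial Topology

lemma hermiteH_zero (x : ℝ) : hermiteH 0 x = 1 := by
  simp [hermiteH, ← exp_add]

lemma hasDerivAt_hermiteH_eq_sub (n : ℕ) (x : ℝ) :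
    HasDerivAt (hermiteH n) (2 * x * hermiteH n x - hermiteH (n + 1) x) x := by
  have hg : HasDerivAt (iteratedDeriv n fun y : ℝ => exp (-y ^ 2))
      (iteratedDeriv (n + 1) (fun y : ℝ => exp (-y ^ 2)) x) x := by
    rw [iteratedDeriv_succ]
    exact ((ContDiff.differentiable_iteratedDeriv (n := ⊤) n (by fun_prop)
      (WithTop.coe_lt_top _)) x).hasDerivAt
  have he : HasDerivAt (fun y : ℝ => exp (y ^ 2)) (exp (x ^ 2) * (2 * x)) x := by
    simpa using (hasDerivAt_pow 2 x).exp
  refine ((he.const_mul ((-1 : ℝ) ^ n)).mul hg).congr_deriv ?_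
  simp only [hermiteH, pow_succ]
  ring

lemma hermiteH_one (x : ℝ) : hermiteH 1 x = 2 * x := by
  have h0 : HasDerivAt (hermiteH 0) 0 x := by
    simpa [funext hermiteH_zero] using hasDerivAt_const x (1 : ℝ)
  have := (hasDerivAt_hermiteH_eq_sub 0 x).unique h0
  rw [hermiteH_zero] at this
  linarith

lemma hasDerivAt_hermiteH_succ (n : ℕ) (x : ℝ) :
    HasDerivAt (hermiteH (n + 1)) (2 * (n + 1) * hermiteH n x) x := by
  induction n generalizing x with
  | zero =>
    simpa [funext hermiteH_one, hermiteH_zero] using (hasDerivAt_id x).const_mul (2 : ℝ)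
  | succ n ih =>
    have hrec :
        hermiteH (n + 2) = fun y => 2 * y * hermiteH (n + 1) y - 2 * (n + 1) * hermiteH n y :=
      funext fun y => by linarith [(hasDerivAt_hermiteH_eq_sub (n + 1) y).unique (ih y)]
    rw [hrec]
    refine ((((hasDerivAt_id x).const_mul 2).mul (ih x)).sub
      ((hasDerivAt_hermiteH_eq_sub n x).const_mul (2 * (n + 1 : ℝ)))).congr_deriv ?_
    push_cast [id]
    ring

-- For `n = 0` the truncated index `n - 1 = 0` is harmless: its coefficient vanishes.
lemma hasDerivAt_hermiteH (n : ℕ) (x : ℝ) :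
    HasDerivAt (hermiteH n) (2 * n * hermiteH (n - 1) x) x := by
  cases n with
  | zero => simpa [funext hermiteH_zero] using hasDerivAt_const x (1 : ℝ)
  | succ n => simpa using hasDerivAt_hermiteH_succ n x

lemma hermiteH_succ (n : ℕ) (x : ℝ) :
    hermiteH (n + 1) x = 2 * x * hermiteH n x - 2 * n * hermiteH (n - 1) x := by
  linarith [(hasDerivAt_hermiteH_eq_sub n x).unique (hasDerivAt_hermiteH n x)]

lemma exists_hermiteH_eq_eval (n : ℕ) : ∃ p : ℝ[X], ∀ x, hermiteH n x = p.eval x := by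
  induction n with
  | zero => exact ⟨1, by simp [hermiteH_zero]⟩
  | succ n ih =>
    obtain ⟨p, hp⟩ := ih
    refine ⟨2 * X * p - derivative p, fun x => ?_⟩
    have hd : HasDerivAt (hermiteH n) ((derivative p).eval x) x := by
      simpa [← funext hp] using p.hasDerivAt x
    have := (hasDerivAt_hermiteH_eq_sub n x).unique hd
    simp only [eval_sub, eval_mul, eval_ofNat, eval_X, ← hp]
    linarith

lemma integrable_eval_mul_exp_neg_mul_sq {b : ℝ} (hb : 0 < b) (p : ℝ[X]) :
    Integrable fun x : ℝ => p.eval x * exp (-b * x ^ 2) := by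
  induction p using Polynomial.induction_on' with
  | add p q hp hq =>
    simp only [eval_add, add_mul]
    exact hp.add hq
  | monomial n a =>
    have := (integrable_rpow_mul_exp_neg_mul_sq hb (s := n)
      (by linarith [n.cast_nonneg (α := ℝ)])).const_mul a
    simpa [mul_assoc] using this

lemma tendsto_eval_mul_exp_neg_mul_sq_atTop {b : ℝ} (hb : 0 < b) (p : ℝ[X]) :
    Tendsto (fun x : ℝ => p.eval x * exp (-b * x ^ 2)) atTop (𝓝 0) := by
  induction p using Polynomial.induction_on' with
  | add p q hp hq => simpa [add_mul] using hp.add hq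
  | monomial n a =>
    have hexp : Tendsto (fun x : ℝ => exp (-(1 / 2) * x)) atTop (𝓝 0) :=
      tendsto_exp_atBot.comp (tendsto_id.const_mul_atTop_of_neg (by norm_num))
    have := ((rpow_mul_exp_neg_mul_sq_isLittleO_exp_neg hb n).trans_tendsto hexp).const_mul a
    simpa [mul_assoc] using this

lemma integrable_exp_mul_hermiteH (n : ℕ) :
    Integrable fun t : ℝ => exp (-t ^ 2 / 2) * hermiteH n t := by
  obtain ⟨p, hp⟩ := exists_hermiteH_eq_eval n
  refine (integrable_eval_mul_exp_neg_mul_sq one_half_pos p).congr (ae_of_all _ fun t => ?_)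
  simp only [hp]
  ring_nf

lemma tendsto_exp_mul_hermiteH_atTop (n : ℕ) :
    Tendsto (fun t : ℝ => exp (-t ^ 2 / 2) * hermiteH n t) atTop (𝓝 0) := by
  obtain ⟨p, hp⟩ := exists_hermiteH_eq_eval n
  refine (tendsto_eval_mul_exp_neg_mul_sq_atTop one_half_pos p).congr fun t => ?_
  simp only [hp]
  ring_nf

lemma hasDerivAt_exp_mul_hermiteH (n : ℕ) (t : ℝ) :
    HasDerivAt (fun t => exp (-t ^ 2 / 2) * hermiteH n t)
      (n * (exp (-t ^ 2 / 2) * hermiteH (n - 1) t) - exp (-t ^ 2 / 2) * hermiteH (n + 1) t / 2)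
      t := by
  have he : HasDerivAt (fun t : ℝ => exp (-t ^ 2 / 2)) (exp (-t ^ 2 / 2) * (-t)) t :=
    (((hasDerivAt_pow 2 t).neg.div_const 2).exp).congr_deriv (by simp only [Pi.neg_apply]; ring)
  refine (he.mul (hasDerivAt_hermiteH n t)).congr_deriv ?_
  rw [hermiteH_succ]
  ring

lemma hermiteI_succ (n : ℕ) (v : ℝ) :
    hermiteI (n + 1) v = 2 * exp (-v ^ 2 / 2) * hermiteH n v + 2 * n * hermiteI (n - 1) v := by
  have hftc := integral_Ioi_of_hasDerivAt_of_tendsto' (a := v)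
    (fun t _ => hasDerivAt_exp_mul_hermiteH n t)
    ((((integrable_exp_mul_hermiteH (n - 1)).const_mul _).sub
      ((integrable_exp_mul_hermiteH (n + 1)).div_const 2)).integrableOn)
    (tendsto_exp_mul_hermiteH_atTop n)
  rw [integral_sub (((integrable_exp_mul_hermiteH _).const_mul _).integrableOn)
    ((integrable_exp_mul_hermiteH _).div_const 2).integrableOn, integral_const_mul,
    integral_div] at hftc
  simp only [hermiteI]
  linarith

lemma hermiteI_zero (v : ℝ) : hermiteI 0 v = √(2 * π) * (1 - gaussPhi v) := by
  have hint : Integrable fun t : ℝ => exp (-t ^ 2 / 2) := by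
    simpa [hermiteH_zero] using integrable_exp_mul_hermiteH 0
  have htotal : ∫ t : ℝ, exp (-t ^ 2 / 2) = √(2 * π) := by
    convert integral_gaussian (1 / 2) using 2 <;> ring_nf
  have hsplit := intervalIntegral.integral_Iic_add_Ioi (b := v) hint.integrableOn hint.integrableOn
  have hpos : 0 < √(2 * π) := by positivity
  simp only [hermiteI, hermiteH_zero, mul_one, gaussPhi, integral_const_mul]
  rw [mul_sub, mul_one, ← mul_assoc, mul_inv_cancel₀ hpos.ne', one_mul]
  linarith

noncomputable def doubleFactorialSum (h : ℕ → ℝ) (n : ℕ) : ℝ :=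
  ∑ k ∈ Finset.range ((n + 1) / 2),
    (2 : ℝ) ^ k
      * ((Nat.doubleFactorial (n - 1) : ℝ) / (Nat.doubleFactorial (n - 1 - 2 * k) : ℝ))
      * h (n - 1 - 2 * k)

lemma doubleFactorialSum_zero (h : ℕ → ℝ) : doubleFactorialSum h 0 = 0 := by
  simp [doubleFactorialSum]

lemma doubleFactorialSum_one (h : ℕ → ℝ) : doubleFactorialSum h 1 = h 0 := by
  simp [doubleFactorialSum]

lemma doubleFactorialSum_add_two (h : ℕ → ℝ) (m : ℕ) :
    doubleFactorialSum h (m + 2) = h (m + 1) + 2 * (m + 1) * doubleFactorialSum h m := by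
  rw [doubleFactorialSum, show (m + 2 + 1) / 2 = (m + 1) / 2 + 1 by omega,
    Finset.sum_range_succ', doubleFactorialSum, Finset.mul_sum, add_comm]
  congr 1
  · simp [(Nat.doubleFactorial_pos _).ne']
  · refine Finset.sum_congr rfl fun k _ => ?_
    rw [show m + 2 - 1 - 2 * (k + 1) = m - 1 - 2 * k by omega, show m + 2 - 1 = m + 1 by omega,
      Nat.doubleFactorial_add_one]
    push_cast
    ring

/-- Closed form for `I_n(v)`; the sum ranges over `0 ≤ k ≤ ⌊(n-1)/2⌋` and is empty
when `n = 0` (note `(n+1)/2 = ⌊(n-1)/2⌋ + 1` for `n ≥ 1`). -/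
theorem hermiteI_eq (n : ℕ) (v : ℝ) :
    hermiteI n v
      = 2 * Real.exp (-v ^ 2 / 2) *
          ∑ k ∈ Finset.range ((n + 1) / 2),
            (2 : ℝ) ^ k
              * ((Nat.doubleFactorial (n - 1) : ℝ)
                  / (Nat.doubleFactorial (n - 1 - 2 * k) : ℝ))
              * hermiteH (n - 1 - 2 * k) v
        + (if Even n then
            (2 : ℝ) ^ (n / 2) * (Nat.doubleFactorial (n - 1) : ℝ)
              * Real.sqrt (2 * Real.pi) * (1 - gaussPhi v)
          else 0) := by
  change hermiteI n v = 2 * exp (-v ^ 2 / 2) * doubleFactorialSum (hermiteH · v) n + _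
  induction n using Nat.twoStepInduction with
  | zero => simp [hermiteI_zero, doubleFactorialSum_zero]
  | one => simp [hermiteI_succ 0, doubleFactorialSum_one, hermiteH_zero]
  | more m ih _ =>
    rw [hermiteI_succ, Nat.add_sub_cancel, ih, doubleFactorialSum_add_two]
    have hpar : Even (m + 2) ↔ Even m := by simp [Nat.even_add]
    by_cases hm : Even m
    · rw [if_pos (hpar.2 hm), if_pos hm, show (m + 2) / 2 = m / 2 + 1 by omega,
        show m + 2 - 1 = m + 1 by omega, Nat.doubleFactorial_add_one]
      push_cast
      ring
    · rw [if_neg (mt hpar.1 hm), if_neg hm]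
      push_cast
      ring
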